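/- arXiv:math/0504190 — 2 statements merged into one kernel-verified Lean document; each statement's English description precedes it below -/
import Mathlib

section
/- Let μ > 1 and let J₀(μ) be the Jacobi operator on ℓ²(ℕ₀) acting by (J₀(μ)C)_n = d_{n+1}C_{n+1} + (2n+1)μ C_n + d_n C_{n−1} with d_n = n^{1/2}(n²−1/4)^{1/4} (d_0 = 0), defined on sequences with finitely many nonzero entries. Then J₀(μ) is positive definite: there exists c > 0 such that ⟨J₀(μ)C, C⟩ ≥ c‖C‖² for all finitely supported C. -/
/-!
Writing `a n = ‖C n‖²`, the quadratic form of a Jacobi operator with diagonal `b` and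
off-diagonal `d` is `∑ b n a n + 2 ∑ d (n+1) Re (C (n+1) conj (C n))`, and by AM–GM each
off-diagonal term is at least `-|d (n+1)| (a n + a (n+1))`; summing these (Gershgorin's bound)
gives `⟨J C, C⟩ ≥ ∑ (b n - |d n| - |d (n+1)|) a n`. For `J₀(μ)` we have `|d n| ≤ n`, so the
weight is at least `(2n+1)(μ - 1) ≥ μ - 1`.
-/

open Finset ComplexConjugate

noncomputable def dEnt (n : ℕ) : ℝ :=
  Real.sqrt n * ((n : ℝ) ^ 2 - 1 / 4) ^ ((1 : ℝ) / 4)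

noncomputable def J0 (μ : ℝ) (C : ℕ → ℂ) (n : ℕ) : ℂ :=
  (dEnt (n + 1) : ℂ) * C (n + 1) + (2 * (n : ℂ) + 1) * (μ : ℂ) * C n
    + (dEnt n : ℂ) * C (n - 1)

lemma abs_dEnt_le (n : ℕ) : |dEnt n| ≤ n := by
  rcases n.eq_zero_or_pos with rfl | hn
  · simp [dEnt]
  have hx : (1 : ℝ) ≤ n := by exact_mod_cast hn
  have hbase : 0 ≤ (n : ℝ) ^ 2 - 1 / 4 := by nlinarith
  have hroot : ((n : ℝ) ^ 2 - 1 / 4) ^ ((1 : ℝ) / 4) ≤ √n := calc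
    _ ≤ ((n : ℝ) ^ 2) ^ ((1 : ℝ) / 4) := Real.rpow_le_rpow hbase (by linarith) (by norm_num)
    _ = √n := by
      rw [Real.sqrt_eq_rpow, ← Real.rpow_natCast, ← Real.rpow_mul (by linarith)]
      norm_num
  rw [dEnt, abs_of_nonneg (mul_nonneg (Real.sqrt_nonneg _) (Real.rpow_nonneg hbase _))]
  calc √n * _ ≤ √n * √n := mul_le_mul_of_nonneg_left hroot (Real.sqrt_nonneg _)
    _ = n := Real.mul_self_sqrt (by linarith)

lemma Complex.re_mul_conj_comm (z w : ℂ) : (z * conj w).re = (w * conj z).re := by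
  rw [← Complex.conj_re, map_mul, Complex.conj_conj, mul_comm]

lemma Complex.two_mul_abs_re_mul_conj_le (z w : ℂ) : 2 * |(z * conj w).re| ≤ ‖z‖ ^ 2 + ‖w‖ ^ 2 :=
  calc 2 * |(z * conj w).re| ≤ 2 * ‖z‖ * ‖w‖ := by
        rw [mul_assoc, ← Complex.norm_conj w, ← norm_mul]
        gcongr
        exact Complex.abs_re_le_norm _
    _ ≤ ‖z‖ ^ 2 + ‖w‖ ^ 2 := two_mul_le_add_sq _ _

lemma Finset.sum_range_succ_eq_of_eq_zero {M : Type*} [AddCommMonoid M] (f : ℕ → M) {N : ℕ}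
    (h0 : f 0 = 0) (hN : f N = 0) : ∑ n ∈ range N, f (n + 1) = ∑ n ∈ range N, f n := by
  simpa [h0, hN] using (sum_range_succ' f N).symm.trans (sum_range_succ f N)

/-- At `n = 0` the truncated `n - 1` reads `C 0`, which is harmless when `d 0 = 0`. -/
noncomputable def jacobiApply (b d : ℕ → ℝ) (C : ℕ → ℂ) (n : ℕ) : ℂ :=
  d (n + 1) * C (n + 1) + b n * C n + d n * C (n - 1)

lemma J0_eq_jacobiApply (μ : ℝ) :
    J0 μ = jacobiApply (fun n => (2 * n + 1) * μ) dEnt := by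
  ext C n
  simp only [J0, jacobiApply]
  push_cast
  ring

lemma re_jacobiApply_mul_conj (b d : ℕ → ℝ) (C : ℕ → ℂ) (n : ℕ) :
    (jacobiApply b d C n * conj (C n)).re
      = b n * ‖C n‖ ^ 2 + d (n + 1) * (C (n + 1) * conj (C n)).re
        + d n * (C n * conj (C (n - 1))).re := by
  have hexp : jacobiApply b d C n * conj (C n)
      = d (n + 1) * (C (n + 1) * conj (C n)) + b n * (C n * conj (C n))
        + d n * (C (n - 1) * conj (C n)) := by
    simp only [jacobiApply]; ring
  rw [hexp, Complex.add_re, Complex.add_re, Complex.re_ofReal_mul, Complex.re_ofReal_mul,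
    Complex.re_ofReal_mul, Complex.mul_conj, Complex.ofReal_re, Complex.normSq_eq_norm_sq,
    Complex.re_mul_conj_comm (C (n - 1))]
  ring

theorem sum_le_re_sum_jacobiApply_mul_conj (b d : ℕ → ℝ) (hd : d 0 = 0) {C : ℕ → ℂ} {N : ℕ}
    (hC : ∀ n, N ≤ n → C n = 0) :
    ∑ n ∈ range N, (b n - |d n| - |d (n + 1)|) * ‖C n‖ ^ 2
      ≤ ∑ n ∈ range N, (jacobiApply b d C n * conj (C n)).re := by
  set a : ℕ → ℝ := fun n => ‖C n‖ ^ 2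
  set h : ℕ → ℝ := fun n => d n * (C n * conj (C (n - 1))).re
  have hedge : ∀ n, 0 ≤ 2 * h (n + 1) + |d (n + 1)| * (a n + a (n + 1)) := fun n => by
    have hamgm := Complex.two_mul_abs_re_mul_conj_le (C (n + 1)) (C n)
    have hprod : |2 * h (n + 1)| ≤ |d (n + 1)| * (a n + a (n + 1)) := by
      simp only [h, a, Nat.add_sub_cancel, abs_mul, abs_two]
      nlinarith [abs_nonneg (d (n + 1))]
    linarith [neg_abs_le (2 * h (n + 1))]
  have hshift : ∑ n ∈ range N, (h (n + 1) + |d (n + 1)| * a (n + 1))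
      = ∑ n ∈ range N, (h n + |d n| * a n) :=
    sum_range_succ_eq_of_eq_zero (fun n => h n + |d n| * a n) (by simp [h, hd])
      (by simp [h, a, hC N le_rfl])
  rw [← sub_nonneg, ← sum_sub_distrib]
  calc 0 ≤ ∑ n ∈ range N, (2 * h (n + 1) + |d (n + 1)| * (a n + a (n + 1))) :=
        sum_nonneg fun n _ => hedge n
    _ = ∑ n ∈ range N, (h (n + 1) + |d (n + 1)| * a n)
          + ∑ n ∈ range N, (h n + |d n| * a n) := by
        rw [← hshift, ← sum_add_distrib]
        exact sum_congr rfl fun n _ => by ring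
    _ = _ := by
        rw [← sum_add_distrib]
        exact sum_congr rfl fun n _ => by
          rw [re_jacobiApply_mul_conj]
          simp only [h, a, Nat.add_sub_cancel]
          ring

lemma exists_forall_ge_eq_zero_of_finite_support {M : Type*} [Zero M] {C : ℕ → M}
    (hC : (Function.support C).Finite) : ∃ N, ∀ n, N ≤ n → C n = 0 := by
  have hev := hC.eventually_cofinite_notMem
  rw [Nat.cofinite_eq_atTop, Filter.eventually_atTop] at hev
  simpa only [Function.notMem_support] using hev

/-- For `μ > 1`, the Jacobi operator `J₀(μ)` is positive definite on finitely
supported sequences: `⟨J₀(μ)C, C⟩ ≥ c‖C‖²` for some `c > 0`. -/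
theorem J0_positive_definite (μ : ℝ) (hμ : 1 < μ) :
    ∃ c : ℝ, 0 < c ∧ ∀ C : ℕ → ℂ, (Function.support C).Finite →
      c * ∑' n, ‖C n‖ ^ 2 ≤ (∑' n, J0 μ C n * (starRingEnd ℂ) (C n)).re := by
  refine ⟨μ - 1, by linarith, fun C hC => ?_⟩
  obtain ⟨N, hN⟩ := exists_forall_ge_eq_zero_of_finite_support hC
  have hout : ∀ n ∉ range N, C n = 0 := fun n hn => hN n (by simpa using hn)
  rw [tsum_eq_sum (s := range N) fun n hn => by simp [hout n hn],
    tsum_eq_sum (s := range N) fun n hn => by simp [hout n hn],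
    Complex.re_sum, mul_sum, J0_eq_jacobiApply]
  refine le_trans (sum_le_sum fun n _ => ?_)
    (sum_le_re_sum_jacobiApply_mul_conj _ dEnt (by simp [dEnt]) hN)
  have hdiag : μ - 1 ≤ (2 * n + 1) * μ - |dEnt n| - |dEnt (n + 1)| := by
    have hn := abs_dEnt_le n
    have hn1 := abs_dEnt_le (n + 1)
    push_cast at hn1
    nlinarith [(Nat.cast_nonneg n : (0 : ℝ) ≤ n)]
  exact mul_le_mul_of_nonneg_right hdiag (by positivity)
end

section
/- For μ > 0, let J₀(μ) be the Jacobi operator on ℓ²(ℕ₀) with off-diagonal entries d_n = n^{1/2}(n²−1/4)^{1/4} and diagonal entries (2n+1)μ, defined on finitely supported sequences. Then J₀(μ) is essentially self-adjoint. -/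
open Finset ComplexConjugate

theorem eq_zero_of_sum_range_le_of_not_summable_inv {x a : ℕ → ℝ} {c : ℝ}
    (hx : ∀ n, 0 ≤ x n) (hsum : Summable x) (ha : ∀ n, 0 ≤ a n)
    (hdiv : ¬ Summable fun n => (a n)⁻¹) (hc : 0 < c)
    (hbound : ∀ N, c * ∑ n ∈ range (N + 1), x n ≤ a (N + 1) * (x N + x (N + 1))) :
    x = 0 := by
  by_contra hne
  obtain ⟨m, hm⟩ := Function.ne_iff.mp hne
  have hxm : 0 < x m := (hx m).lt_of_ne (Ne.symm hm)
  have htail : ∀ N, m ≤ N → (a (N + 1))⁻¹ ≤ (c * x m)⁻¹ * (x N + x (N + 1)) := by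
    intro N hN
    have hmass : c * x m ≤ a (N + 1) * (x N + x (N + 1)) :=
      (mul_le_mul_of_nonneg_left
        (single_le_sum (fun n _ => hx n) (mem_range.mpr (Nat.lt_succ_of_le hN))) hc.le).trans
        (hbound N)
    rcases (ha (N + 1)).eq_or_lt with h0 | hpos
    · rw [← h0, inv_zero]
      exact mul_nonneg (by positivity) (add_nonneg (hx _) (hx _))
    · rw [inv_mul_eq_div, le_div_iff₀ (by positivity), ← div_eq_inv_mul, div_le_iff₀ hpos]
      linarith
  have hshift : Summable fun N => (a (N + 1))⁻¹ :=
    ((hsum.add ((summable_nat_add_iff (f := x) 1).mpr hsum)).mul_left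
      (c * x m)⁻¹).of_norm_bounded_eventually_nat
      (Filter.eventually_atTop.mpr ⟨m, fun N hN => by
        rw [Real.norm_of_nonneg (inv_nonneg.mpr (ha _))]
        exact htail N hN⟩)
  exact hdiv ((summable_nat_add_iff 1).mp hshift)

namespace Jacobi

/-- At `n = 0` the truncated index `n - 1 = 0` is harmless as long as `a 0 = 0`. -/
def IsSolution (a b : ℕ → ℝ) (z : ℂ) (C : ℕ → ℂ) : Prop :=
  ∀ n, (a (n + 1) : ℂ) * C (n + 1) + (b n : ℂ) * C n + (a n : ℂ) * C (n - 1) = z * C n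

def wronskian (a : ℕ → ℝ) (C : ℕ → ℂ) (n : ℕ) : ℂ :=
  a n * (C n * conj (C (n - 1)) - conj (C n) * C (n - 1))

variable {a b : ℕ → ℝ} {z : ℂ} {C : ℕ → ℂ}

theorem IsSolution.wronskian_succ_sub (h : IsSolution a b z C) (n : ℕ) :
    wronskian a C (n + 1) - wronskian a C n = (z - conj z) * ‖C n‖ ^ 2 := by
  have h1 := h n
  have h2 := congrArg conj h1
  simp only [map_add, map_mul, Complex.conj_ofReal] at h2
  simp only [wronskian, Nat.add_sub_cancel, ← Complex.mul_conj']
  linear_combination conj (C n) * h1 - C n * h2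

theorem IsSolution.wronskian_eq (h : IsSolution a b z C) (ha : a 0 = 0) (N : ℕ) :
    wronskian a C N = (z - conj z) * ∑ n ∈ range N, (‖C n‖ ^ 2 : ℂ) := by
  have hW0 : wronskian a C 0 = 0 := by simp [wronskian, ha]
  rw [← sub_zero (wronskian a C N), ← hW0, ← sum_range_sub, mul_sum]
  exact sum_congr rfl fun n _ => h.wronskian_succ_sub n

theorem IsSolution.norm_wronskian (h : IsSolution a b z C) (ha : a 0 = 0) (N : ℕ) :
    ‖wronskian a C N‖ = 2 * |z.im| * ∑ n ∈ range N, ‖C n‖ ^ 2 := by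
  rw [h.wronskian_eq ha, Complex.sub_conj, norm_mul, norm_mul, Complex.norm_I, mul_one,
    Complex.norm_real, Real.norm_eq_abs, abs_mul, abs_two]
  norm_cast
  rw [Real.norm_of_nonneg (sum_nonneg fun n _ => by positivity)]

theorem norm_wronskian_succ_le (N : ℕ) :
    ‖wronskian a C (N + 1)‖ ≤ |a (N + 1)| * (‖C N‖ ^ 2 + ‖C (N + 1)‖ ^ 2) := by
  rw [wronskian, Nat.add_sub_cancel, norm_mul, Complex.norm_real, Real.norm_eq_abs]
  gcongr
  calc ‖C (N + 1) * conj (C N) - conj (C (N + 1)) * C N‖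
      ≤ ‖C (N + 1) * conj (C N)‖ + ‖conj (C (N + 1)) * C N‖ := norm_sub_le _ _
    _ = 2 * (‖C N‖ * ‖C (N + 1)‖) := by simp only [norm_mul, Complex.norm_conj]; ring
    _ ≤ ‖C N‖ ^ 2 + ‖C (N + 1)‖ ^ 2 := by nlinarith [sq_nonneg (‖C N‖ - ‖C (N + 1)‖)]

/-- Carleman's criterion. -/
theorem IsSolution.eq_zero_of_summable (h : IsSolution a b z C) (hz : z.im ≠ 0)
    (ha0 : a 0 = 0) (ha : ∀ n, 0 ≤ a n) (hcarleman : ¬ Summable fun n => (a n)⁻¹)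
    (hC : Summable fun n => ‖C n‖ ^ 2) : C = 0 := by
  have hnorm : (fun n => ‖C n‖ ^ 2) = 0 := by
    refine eq_zero_of_sum_range_le_of_not_summable_inv (fun n => by positivity) hC ha hcarleman
      (by positivity : 0 < 2 * |z.im|) fun N => ?_
    rw [← h.norm_wronskian ha0, ← abs_of_nonneg (ha (N + 1))]
    exact norm_wronskian_succ_le N
  funext n
  simpa using congrFun hnorm n

end Jacobi

theorem dEnt_zero : dEnt 0 = 0 := by simp [dEnt]

theorem dEnt_pos {n : ℕ} (hn : 0 < n) : 0 < dEnt n := by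
  have h1 : (1 : ℝ) ≤ n := by exact_mod_cast hn
  exact mul_pos (Real.sqrt_pos.mpr (by linarith)) (Real.rpow_pos_of_pos (by nlinarith) _)

theorem dEnt_nonneg (n : ℕ) : 0 ≤ dEnt n := by
  rcases n.eq_zero_or_pos with rfl | hn
  · exact dEnt_zero.ge
  · exact (dEnt_pos hn).le

theorem dEnt_le_self (n : ℕ) : dEnt n ≤ n := by
  rcases n.eq_zero_or_pos with rfl | hn
  · simp [dEnt_zero]
  have h1 : (1 : ℝ) ≤ n := by exact_mod_cast hn
  have hsqrt : ((n : ℝ) ^ 2) ^ ((1 : ℝ) / 4) = Real.sqrt n := by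
    rw [Real.sqrt_eq_rpow, ← Real.rpow_natCast, ← Real.rpow_mul (by linarith)]
    norm_num
  calc dEnt n ≤ Real.sqrt n * Real.sqrt n := by
        unfold dEnt
        gcongr
        rw [← hsqrt]
        exact Real.rpow_le_rpow (by nlinarith) (by linarith) (by norm_num)
    _ = n := Real.mul_self_sqrt (by linarith)

theorem not_summable_dEnt_inv : ¬ Summable fun n => (dEnt n)⁻¹ := fun h =>
  Real.not_summable_natCast_inv <| h.of_nonneg_of_le (fun n => by positivity) fun n => by
    rcases n.eq_zero_or_pos with rfl | hn
    · simp [dEnt_zero]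
    · exact inv_anti₀ (dEnt_pos hn) (dEnt_le_self n)

theorem J0_essentially_selfAdjoint_general (μ : ℝ) :
    ∀ z : ℂ, (z = Complex.I ∨ z = -Complex.I) →
      ∀ C : ℕ → ℂ, Summable (fun n => ‖C n‖ ^ 2) →
        (∀ n : ℕ, (dEnt (n + 1) : ℂ) * C (n + 1) + (2 * (n : ℂ) + 1) * (μ : ℂ) * C n
            + (dEnt n : ℂ) * C (n - 1) = z * C n) →
        C = 0 := by
  intro z hz C hC hJ
  have hsol : Jacobi.IsSolution dEnt (fun n => (2 * n + 1) * μ) z C := fun n => by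
    push_cast
    exact hJ n
  have him : z.im ≠ 0 := by rcases hz with rfl | rfl <;> simp
  exact hsol.eq_zero_of_summable him dEnt_zero dEnt_nonneg not_summable_dEnt_inv hC

/-- Essential self-adjointness of the Jacobi operator `J₀(μ)` (with off-diagonal
entries `d_n` and diagonal `(2n+1)μ`), defined on finitely supported sequences,
expressed through the vanishing of both deficiency indices: for `z = ±i` the
formal eigenvalue equation `J₀(μ)C = zC` has no nonzero `ℓ²` solution. -/
theorem J0_essentially_selfAdjoint (μ : ℝ) (hμ : 0 < μ) :
    ∀ z : ℂ, (z = Complex.I ∨ z = -Complex.I) →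
      ∀ C : ℕ → ℂ, Summable (fun n => ‖C n‖ ^ 2) →
        (∀ n : ℕ, (dEnt (n + 1) : ℂ) * C (n + 1) + (2 * (n : ℂ) + 1) * (μ : ℂ) * C n
            + (dEnt n : ℂ) * C (n - 1) = z * C n) →
        C = 0 :=
  J0_essentially_selfAdjoint_general μ
end
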